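/- The series ∑_{n≥1} n * g_n * (27/256)^n is summable; that is, the term-by-term derivative of the power series ∑_{n≥1} g_n x^n still converges at the point x = 27/256 on its circle of convergence. -/

import Mathlib

/-!
The factorial formula gives `g (n+1) / g n = (4n+2)(4n+3)(4n+4)(4n+5) / ((n+2)(3n+3)(3n+4)(3n+5))`,
so the terms `a n = n g_n (27/256)^n` satisfy `a (n+1) / a n = 1 - 3/(2n) + O(n⁻²)`. Raabe's test
with exponent `5/4 ∈ (1, 3/2)` then applies from `n = 6` on.
-/

/-- `gseq n` is the number `g_n = 2·(4n+1)!/((n+1)!·(3n+2)!)` of rooted 3-connected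
planar triangulations with `2n+2` faces (as a real number), with `g_0 = 0`. -/
noncomputable def gseq (n : ℕ) : ℝ :=
  if n = 0 then 0
  else 2 * (Nat.factorial (4 * n + 1)) / ((Nat.factorial (n + 1)) * (Nat.factorial (3 * n + 2)))

open Finset

theorem summable_of_raabe {a : ℕ → ℝ} (ha : ∀ n, 0 ≤ a n) {p : ℝ} (hp : 1 < p) (N : ℕ)
    (h : ∀ n ≥ N, (n + p) * a (n + 1) ≤ n * a n) : Summable a := by
  set c : ℕ → ℝ := fun k => (k + N : ℕ) * a (k + N)
  have hstep (k : ℕ) : (p - 1) * a (k + (N + 1)) ≤ c k - c (k + 1) := by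
    have := h (k + N) (Nat.le_add_left N k)
    simp only [c, ← add_assoc, Nat.add_right_comm k 1 N]
    push_cast at this ⊢
    linarith
  refine (summable_nat_add_iff (N + 1)).1 <| summable_of_sum_range_le (c := c 0 / (p - 1))
    (fun k => ha _) fun M => ?_
  rw [le_div_iff₀ (sub_pos.2 hp), mul_comm, mul_sum]
  calc ∑ k ∈ range M, (p - 1) * a (k + (N + 1)) ≤ ∑ k ∈ range M, (c k - c (k + 1)) :=
        sum_le_sum fun k _ => hstep k
    _ = c 0 - c M := sum_range_sub' c M
    _ ≤ c 0 := sub_le_self _ (mul_nonneg (Nat.cast_nonneg _) (ha _))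

theorem gseq_nonneg (n : ℕ) : 0 ≤ gseq n := by
  unfold gseq; split <;> positivity

theorem gseq_succ_mul {n : ℕ} (hn : n ≠ 0) :
    ((n + 2) * (3 * n + 3) * (3 * n + 4) * (3 * n + 5)) * gseq (n + 1)
      = ((4 * n + 2) * (4 * n + 3) * (4 * n + 4) * (4 * n + 5)) * gseq n := by
  rw [gseq, gseq, if_neg hn, if_neg n.succ_ne_zero,
    show 4 * (n + 1) + 1 = 4 * n + 1 + 1 + 1 + 1 + 1 by ring,
    show 3 * (n + 1) + 2 = 3 * n + 2 + 1 + 1 + 1 by ring]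
  simp only [Nat.factorial_succ]
  push_cast
  field_simp
  ring

theorem raabe_poly_le {x : ℝ} (hx : 6 ≤ x) :
    27 * (4 * x + 5) * (x + 1) * ((4 * x + 2) * (4 * x + 3) * (4 * x + 4) * (4 * x + 5))
      ≤ 1024 * x ^ 2 * ((x + 2) * (3 * x + 3) * (3 * x + 4) * (3 * x + 5)) := by
  -- In `m = x - 6` the difference has positive coefficients.
  obtain ⟨m, hm, rfl⟩ : ∃ m, 0 ≤ m ∧ x = m + 6 := ⟨x - 6, by linarith, by ring⟩
  nlinarith [pow_nonneg hm 2, pow_nonneg hm 3, pow_nonneg hm 4, pow_nonneg hm 5]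

theorem raabe_gseq {n : ℕ} (hn : 6 ≤ n) :
    (n + 5 / 4 : ℝ) * ((n + 1 : ℕ) * gseq (n + 1) * (27 / 256) ^ (n + 1))
      ≤ n * (n * gseq n * (27 / 256) ^ n) := by
  set Q : ℝ := (n + 2) * (3 * n + 3) * (3 * n + 4) * (3 * n + 5)
  set P : ℝ := (4 * n + 2) * (4 * n + 3) * (4 * n + 4) * (4 * n + 5)
  have hQ : 0 < Q := by positivity
  have hpoly : 27 * (4 * n + 5) * (n + 1) * P ≤ 1024 * n ^ 2 * Q :=
    raabe_poly_le (by exact_mod_cast hn)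
  have hg : 0 ≤ gseq n * (27 / 256 : ℝ) ^ n := mul_nonneg (gseq_nonneg n) (by positivity)
  rw [← mul_le_mul_iff_of_pos_left hQ]
  push_cast
  calc Q * ((n + 5 / 4) * ((n + 1) * gseq (n + 1) * (27 / 256) ^ (n + 1)))
      = (4 * n + 5) * (n + 1) * (27 / 1024) * (Q * gseq (n + 1)) * (27 / 256 : ℝ) ^ n := by
        ring
    _ = 27 * (4 * n + 5) * (n + 1) * P / 1024 * (gseq n * (27 / 256) ^ n) := by
        rw [gseq_succ_mul (by omega)]; ring
    _ ≤ 1024 * n ^ 2 * Q / 1024 * (gseq n * (27 / 256) ^ n) := by gcongr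
    _ = Q * (n * (n * gseq n * (27 / 256) ^ n)) := by ring

/-- The term-by-term derivative series `∑ n·g_n·(27/256)ⁿ` still converges at the
point `x = 27/256` on the circle of convergence. -/
theorem stmt_3 :
    Summable (fun n : ℕ => (n : ℝ) * gseq n * (27 / 256 : ℝ) ^ n) :=
  summable_of_raabe (fun n => by have := gseq_nonneg n; positivity) (by norm_num : (1 : ℝ) < 5 / 4)
    6 fun _ hn => raabe_gseq hn
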